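/- The convex hull of the null quadric 𝔄 = {z ∈ ℂ³ : z₁² + z₂² + z₃² = 0} is all of ℂ³ (viewing ℂ³ as the real vector space ℝ⁶). -/
import Mathlib

open Complex

theorem stmt_3 :
    convexHull ℝ {z : Fin 3 → ℂ | ∑ i, z i ^ 2 = 0} = Set.univ := by
  apply Set.eq_univ_of_forall
  intro w
  set z : Fin 6 → (Fin 3 → ℂ) := fun k =>
    match k with
    | 0 => (3 * w 0) • ![1, I, 0]
    | 1 => (3 * w 0) • ![1, -I, 0]
    | 2 => (3 * w 1) • ![0, 1, I]
    | 3 => (3 * w 1) • ![0, 1, -I]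
    | 4 => (3 * w 2) • ![I, 0, 1]
    | 5 => (3 * w 2) • ![-I, 0, 1] with hz
  have key : ∑ k : Fin 6, (1/6 : ℝ) • z k ∈ convexHull ℝ {z : Fin 3 → ℂ | ∑ i, z i ^ 2 = 0} := by
    apply (convex_convexHull ℝ _).sum_mem
    · intro i _; norm_num
    · simp
    · intro k _
      apply subset_convexHull
      fin_cases k <;>
        · show ∑ i : Fin 3, _ ^ 2 = 0
          simp only [hz, Fin.sum_univ_three, Pi.smul_apply, smul_eq_mul,
            Matrix.cons_val_zero, Matrix.cons_val_one, Matrix.head_cons,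
            Matrix.cons_val_two, Matrix.tail_cons]
          ring_nf
          simp [Complex.I_sq]
          try ring
  have hw : ∑ k : Fin 6, (1/6 : ℝ) • z k = w := by
    funext m
    simp only [Fin.sum_univ_six, hz]
    fin_cases m <;>
      · simp
        ring
  rwa [hw] at key
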